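/- Let μ ∈ 𝒫₂(ℝ^d), U a compact metric space, f : ℝ^d × U → ℝ^d continuous with |f(x,u) − f(y,u)| ≤ C_f|x−y| and |f(x,u)| ≤ C₁(1+|x|+ς(μ)). Let (ζₙ) ⊂ 𝒫(U) converge narrowly to ζ ∈ 𝒫(U), and define ṽₙ(y) := ∫_U f(y,u) ζₙ(du), v(y) := ∫_U f(y,u) ζ(du). Then ‖ṽₙ − v‖_{L²(μ)} → 0 as n → ∞. -/

import Mathlib

open MeasureTheory Filter Topology

/-!
The averaged fields `y ↦ ∫ f (y, u) dν` are continuous (`f` is jointly continuous and `U` is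
compact), converge pointwise (narrow convergence tested against the coordinates of `f (y, ·)`),
and are all dominated by `C₁ (1 + |y| + ς(μ))`, which lies in `L²(μ)` since `μ` has a finite
second moment. Dominated convergence then gives convergence in `L²(μ)`.
-/

theorem tendsto_integral_of_forall_tendsto_integral_real {ι U E : Type*} {l : Filter ι}
    [MeasurableSpace U] [TopologicalSpace U]
    [NormedAddCommGroup E] [NormedSpace ℝ E] [FiniteDimensional ℝ E]
    {ν : ι → Measure U} {ν₀ : Measure U}
    (h : ∀ g : U → ℝ, Continuous g → Tendsto (fun n => ∫ u, g u ∂ν n) l (𝓝 (∫ u, g u ∂ν₀)))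
    {g : U → E} (hg : Continuous g) (hint : ∀ n, Integrable g (ν n)) (hint₀ : Integrable g ν₀) :
    Tendsto (fun n => ∫ u, g u ∂ν n) l (𝓝 (∫ u, g u ∂ν₀)) := by
  let e := (Module.finBasis ℝ E).equivFunL
  rw [e.toHomeomorph.isInducing.tendsto_nhds_iff]
  refine tendsto_pi_nhds.2 fun i => ?_
  let coord := (ContinuousLinearMap.proj i).comp e.toContinuousLinearMap
  have hcoord : ∀ ν', Integrable g ν' → e (∫ u, g u ∂ν') i = ∫ u, coord (g u) ∂ν' :=
    fun ν' hν' => (coord.integral_comp_comm hν').symm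
  simp only [Function.comp_def, ContinuousLinearEquiv.coe_toHomeomorph, hcoord _ (hint _),
    hcoord _ hint₀]
  exact h _ (coord.continuous.comp hg)

theorem tendsto_integral_norm_sub_sq_of_dominated {X E : Type*} [MeasurableSpace X]
    [NormedAddCommGroup E] {μ : Measure X} {F : ℕ → X → E} {G : X → E} {B : X → ℝ}
    (hF : ∀ n, AEStronglyMeasurable (F n) μ) (hG : AEStronglyMeasurable G μ) (hB : MemLp B 2 μ)
    (hFB : ∀ n x, ‖F n x‖ ≤ B x) (hGB : ∀ x, ‖G x‖ ≤ B x)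
    (hlim : ∀ x, Tendsto (F · x) atTop (𝓝 (G x))) :
    Tendsto (fun n => ∫ x, ‖F n x - G x‖ ^ 2 ∂μ) atTop (𝓝 0) := by
  have hdom : ∀ n x, ‖F n x - G x‖ ^ 2 ≤ 4 * B x ^ 2 := fun n x =>
    calc ‖F n x - G x‖ ^ 2 ≤ (B x + B x) ^ 2 := by
          gcongr
          exact (norm_sub_le _ _).trans (add_le_add (hFB n x) (hGB x))
      _ = 4 * B x ^ 2 := by ring
  have hpt : ∀ x, Tendsto (fun n => ‖F n x - G x‖ ^ 2) atTop (𝓝 0) := fun x => by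
    simpa using ((hlim x).sub_const (G x)).norm.pow 2
  simpa using tendsto_integral_of_dominated_convergence (fun x => 4 * B x ^ 2)
    (fun n => ((hF n).sub hG).norm.pow 2) (hB.integrable_sq.const_mul 4)
    (fun n => Eventually.of_forall fun x => by
      simpa only [Pi.pow_apply, Pi.sub_apply, Real.norm_eq_abs, abs_pow, abs_norm] using hdom n x)
    (Eventually.of_forall hpt)

theorem stmt16_general {d : ℕ} {U : Type*} [MetricSpace U] [CompactSpace U]
    [MeasurableSpace U] [BorelSpace U]
    (μ : Measure (EuclideanSpace ℝ (Fin d))) [IsProbabilityMeasure μ]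
    (hμ2 : Integrable (fun x => ‖x‖ ^ 2) μ)
    (f : EuclideanSpace ℝ (Fin d) × U → EuclideanSpace ℝ (Fin d)) (hf : Continuous f)
    (C₁ : ℝ)
    (hgrowth : ∀ x u, ‖f (x, u)‖ ≤ C₁ * (1 + ‖x‖ + Real.sqrt (∫ y, ‖y‖ ^ 2 ∂μ)))
    (ζn : ℕ → Measure U) (ζ : Measure U)
    [∀ n, IsProbabilityMeasure (ζn n)] [IsProbabilityMeasure ζ]
    (hnarrow : ∀ g : U → ℝ, Continuous g →
      Tendsto (fun n => ∫ u, g u ∂(ζn n)) atTop (𝓝 (∫ u, g u ∂ζ))) :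
    Tendsto (fun n => ∫ y, ‖(∫ u, f (y, u) ∂(ζn n)) - ∫ u, f (y, u) ∂ζ‖ ^ 2 ∂μ)
      atTop (𝓝 0) := by
  set σ := Real.sqrt (∫ y, ‖y‖ ^ 2 ∂μ)
  have hint (ν : Measure U) [IsFiniteMeasure ν] (y) : Integrable (fun u => f (y, u)) ν :=
    (hf.comp (.prodMk_right y)).integrable_of_hasCompactSupport (.of_compactSpace _)
  have hcont (ν : Measure U) [IsFiniteMeasure ν] : Continuous fun y => ∫ u, f (y, u) ∂ν := by
    simpa using continuous_parametric_integral_of_continuous (μ := ν) (f := fun y u => f (y, u))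
      hf isCompact_univ
  have hbound (ν : Measure U) [IsProbabilityMeasure ν] (y) :
      ‖∫ u, f (y, u) ∂ν‖ ≤ C₁ * (1 + ‖y‖ + σ) := by
    simpa using norm_integral_le_of_norm_le_const (μ := ν) (Eventually.of_forall (hgrowth y))
  have hB : MemLp (fun y => C₁ * (1 + ‖y‖ + σ)) 2 μ := by
    have hnorm : MemLp (fun y => ‖y‖) 2 μ :=
      ((memLp_two_iff_integrable_sq_norm aestronglyMeasurable_id).2 hμ2).norm
    exact (((memLp_const (1 : ℝ)).add hnorm).add (memLp_const σ)).const_mul C₁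
  refine tendsto_integral_norm_sub_sq_of_dominated (fun n => (hcont _).aestronglyMeasurable)
    (hcont ζ).aestronglyMeasurable hB (fun n => hbound _) (hbound ζ) fun y => ?_
  exact tendsto_integral_of_forall_tendsto_integral_real hnarrow (hf.comp (.prodMk_right y))
    (fun n => hint _ y) (hint ζ y)

theorem stmt16 {d : ℕ} {U : Type*} [MetricSpace U] [CompactSpace U]
    [MeasurableSpace U] [BorelSpace U]
    (μ : Measure (EuclideanSpace ℝ (Fin d))) [IsProbabilityMeasure μ]
    (hμ2 : Integrable (fun x => ‖x‖ ^ 2) μ)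
    (f : EuclideanSpace ℝ (Fin d) × U → EuclideanSpace ℝ (Fin d)) (hf : Continuous f)
    (Cf C₁ : ℝ)
    (hLip : ∀ x y u, ‖f (x, u) - f (y, u)‖ ≤ Cf * ‖x - y‖)
    (hgrowth : ∀ x u, ‖f (x, u)‖ ≤ C₁ * (1 + ‖x‖ + Real.sqrt (∫ y, ‖y‖ ^ 2 ∂μ)))
    (ζn : ℕ → Measure U) (ζ : Measure U)
    [∀ n, IsProbabilityMeasure (ζn n)] [IsProbabilityMeasure ζ]
    (hnarrow : ∀ g : U → ℝ, Continuous g →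
      Tendsto (fun n => ∫ u, g u ∂(ζn n)) atTop (𝓝 (∫ u, g u ∂ζ))) :
    Tendsto (fun n => ∫ y, ‖(∫ u, f (y, u) ∂(ζn n)) - ∫ u, f (y, u) ∂ζ‖ ^ 2 ∂μ)
      atTop (𝓝 0) :=
  stmt16_general μ hμ2 f hf C₁ hgrowth ζn ζ hnarrow
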